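/- arXiv:2306.00920 — 6 statements merged into one kernel-verified Lean document; each statement's English description precedes it below -/
import Mathlib

section
/- Let n ≥ 2, let D = {(X_1,Y_1),…,(X_n,Y_n)} be a dataset of pairs of reals with all X_i distinct and all Y_i distinct, and let D' = D ∪ {(X_{n+1},Y_{n+1})} be a neighboring dataset obtained by adding one point (so that D' also has all first coordinates distinct and all second coordinates distinct). Then |τ̂(D) − τ̂(D')| ≤ 3/2. -/
/-!
Removing the last point `(X_{n+1}, Y_{n+1})` loses exactly the discordant pairs that contain it,
of which there are at most `n`; so the discordance counts satisfy `d ≤ d' ≤ d + n`, while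
`d ≤ n(n-1)/2`. These three bounds already give `|τ̂(D) - τ̂(D')| ≤ 3/2` by elementary
algebra.
-/

/-- The number of discordant pairs of a dataset `{(X i, Y i)}`: pairs of indices `i < i'`
with `(X i - X i') * (Y i - Y i') < 0`. -/
noncomputable def discord {m : ℕ} (X Y : Fin m → ℝ) : ℕ :=
  (Finset.univ.filter (fun p : Fin m × Fin m =>
    p.1 < p.2 ∧ (X p.1 - X p.2) * (Y p.1 - Y p.2) < 0)).card

/-- The empirical Kendall rank correlation `τ̂ = m/2 - 2 d / (m - 1)`. -/
noncomputable def tauHat {m : ℕ} (X Y : Fin m → ℝ) : ℝ :=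
  (m : ℝ) / 2 - 2 * (discord X Y : ℝ) / ((m : ℝ) - 1)

open Finset

theorem discord_eq_discord_castSucc_add {n : ℕ} (X Y : Fin (n + 1) → ℝ) :
    discord X Y = discord (fun i : Fin n => X i.castSucc) (fun i : Fin n => Y i.castSucc) +
      #{i : Fin n | (X i.castSucc - X (Fin.last n)) * (Y i.castSucc - Y (Fin.last n)) < 0} := by
  have last_not_lt (i : Fin n) : ¬ Fin.last n < i.castSucc := (Fin.castSucc_lt_last i).not_gt
  simp only [discord, card_filter, Fintype.sum_prod_type, Fin.sum_univ_castSucc,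
    Fin.castSucc_lt_castSucc_iff, Fin.castSucc_lt_last, lt_self_iff_false, last_not_lt,
    true_and, false_and, if_false, sum_const_zero, add_zero, sum_add_distrib]

theorem discord_le_choose_two {m : ℕ} (X Y : Fin m → ℝ) : discord X Y ≤ m.choose 2 := by
  induction m with
  | zero => simp [discord]
  | succ n ih =>
    rw [discord_eq_discord_castSucc_add, Nat.choose_succ_succ', Nat.choose_one_right, add_comm n]
    exact Nat.add_le_add (ih _ _) ((card_filter_le _ _).trans_eq (card_fin n))

/-- With `a`, `b` the discordance counts of the `n`- and `(n+1)`-point datasets, the difference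
of the two `τ̂` is `(2b(n-1) - 2an) / (n(n-1)) - 1/2`, and the bounds force the fraction
into `[-1, 2]`. -/
theorem abs_sub_le_three_halves_of_discord_bounds {n a b : ℝ} (hn : 2 ≤ n) (ha : 0 ≤ a)
    (ha' : a ≤ n * (n - 1) / 2) (hab : a ≤ b) (hb : b ≤ a + n) :
    |(n / 2 - 2 * a / (n - 1)) - ((n + 1) / 2 - 2 * b / (n + 1 - 1))| ≤ 3 / 2 := by
  have hn0 : 0 < n := by linarith
  have hn1 : 0 < n - 1 := by linarith
  have key : (n / 2 - 2 * a / (n - 1)) - ((n + 1) / 2 - 2 * b / (n + 1 - 1)) =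
      (2 * b * (n - 1) - 2 * a * n) / (n * (n - 1)) - 1 / 2 := by
    rw [add_sub_cancel_right]
    field_simp
    ring
  have lower : -1 ≤ (2 * b * (n - 1) - 2 * a * n) / (n * (n - 1)) := by
    rw [le_div_iff₀ (by positivity)]
    nlinarith
  have upper : (2 * b * (n - 1) - 2 * a * n) / (n * (n - 1)) ≤ 2 := by
    rw [div_le_iff₀ (by positivity)]
    nlinarith
  rw [key, abs_le]
  constructor <;> linarith

theorem kendall_add_one_sensitivity_general (n : ℕ) (hn : 2 ≤ n)
    (X Y : Fin (n + 1) → ℝ) :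
    |tauHat (fun i : Fin n => X i.castSucc) (fun i : Fin n => Y i.castSucc) - tauHat X Y|
      ≤ 3 / 2 := by
  have hsplit := discord_eq_discord_castSucc_add X Y
  have hlast :
      #{i : Fin n | (X i.castSucc - X (Fin.last n)) * (Y i.castSucc - Y (Fin.last n)) < 0} ≤ n :=
    (card_filter_le _ _).trans_eq (card_fin n)
  have hsmall :=
    discord_le_choose_two (fun i : Fin n => X i.castSucc) (fun i : Fin n => Y i.castSucc)
  unfold tauHat
  push_cast
  refine abs_sub_le_three_halves_of_discord_bounds (by exact_mod_cast hn) (Nat.cast_nonneg _)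
    ?_ ?_ ?_
  · rw [← Nat.cast_choose_two]
    exact_mod_cast hsmall
  · rw [hsplit]
    exact_mod_cast Nat.le_add_right _ _
  · rw [hsplit]
    exact_mod_cast Nat.add_le_add_left hlast _

/-- Adding one data point to a tie-free dataset of at least two points changes the
empirical Kendall rank correlation by at most `3/2`. -/
theorem kendall_add_one_sensitivity (n : ℕ) (hn : 2 ≤ n)
    (X Y : Fin (n + 1) → ℝ) (hX : Function.Injective X) (hY : Function.Injective Y) :
    |tauHat (fun i : Fin n => X i.castSucc) (fun i : Fin n => Y i.castSucc) - tauHat X Y|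
      ≤ 3 / 2 :=
  kendall_add_one_sensitivity_general n hn X Y
end

section
/- For every n ≥ 2 there exist a dataset D of n pairs of reals with all first coordinates distinct and all second coordinates distinct having no discordant pairs (d_D = 0), and a neighboring dataset D' = D ∪ {(x_0,y_0)} (still with all first coordinates distinct and all second coordinates distinct) in which the added point is discordant with every point of D (d_{D'} = n), and for any such pair τ̂(D) − τ̂(D') = 3/2. -/
open Finset

theorem discord_self {m : ℕ} (X : Fin m → ℝ) : discord X X = 0 := by
  simp only [discord, card_eq_zero, filter_eq_empty_iff]
  exact fun p _ h => (mul_self_nonneg _).not_gt h.2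

theorem discord_snoc {n : ℕ} (X Y : Fin n → ℝ) (x₀ y₀ : ℝ) :
    discord (Fin.snoc X x₀ : Fin (n + 1) → ℝ) (Fin.snoc Y y₀) =
      discord X Y + #{j | (X j - x₀) * (Y j - y₀) < 0} := by
  simp only [discord, card_filter, Fintype.sum_prod_type, Fin.sum_univ_castSucc,
    Fin.snoc_castSucc, Fin.snoc_last, Fin.castSucc_lt_castSucc_iff, Fin.castSucc_lt_last,
    true_and, (Fin.le_last _).not_gt, false_and, if_false, sum_const_zero, add_zero,
    sum_add_distrib]

theorem tauHat_sub_tauHat_of_discord {n : ℕ} (hn : n ≠ 0) (X Y : Fin n → ℝ)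
    (X' Y' : Fin (n + 1) → ℝ) (h : discord X Y = 0) (h' : discord X' Y' = n) :
    tauHat X Y - tauHat X' Y' = 3 / 2 := by
  have hn' : (n : ℝ) ≠ 0 := Nat.cast_ne_zero.2 hn
  simp only [tauHat, h, h', Nat.cast_zero, Nat.cast_add_one, add_sub_cancel_right]
  field_simp
  ring

/-- The sensitivity bound `3/2` for Kendall rank correlation is attained: there is a tie-free
dataset `D` with no discordant pairs and a tie-free neighbor `D' = D ∪ {(x₀, y₀)}` whose added
point is discordant with every point of `D` (so `d_{D'} = n`), and any such pair satisfies
`τ̂(D) - τ̂(D') = 3/2`. -/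
theorem kendall_sensitivity_tight (n : ℕ) (hn : 2 ≤ n) :
    (∃ (X Y : Fin n → ℝ) (x₀ y₀ : ℝ),
      Function.Injective X ∧ Function.Injective Y ∧
      Function.Injective (Fin.snoc X x₀ : Fin (n + 1) → ℝ) ∧
      Function.Injective (Fin.snoc Y y₀ : Fin (n + 1) → ℝ) ∧
      discord X Y = 0 ∧
      (∀ j : Fin n, (X j - x₀) * (Y j - y₀) < 0) ∧
      discord (Fin.snoc X x₀ : Fin (n + 1) → ℝ) (Fin.snoc Y y₀) = n) ∧
    (∀ (X Y : Fin n → ℝ) (x₀ y₀ : ℝ),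
      Function.Injective X → Function.Injective Y →
      Function.Injective (Fin.snoc X x₀ : Fin (n + 1) → ℝ) →
      Function.Injective (Fin.snoc Y y₀ : Fin (n + 1) → ℝ) →
      discord X Y = 0 →
      (∀ j : Fin n, (X j - x₀) * (Y j - y₀) < 0) →
      discord (Fin.snoc X x₀ : Fin (n + 1) → ℝ) (Fin.snoc Y y₀) = n →
      tauHat X Y - tauHat (Fin.snoc X x₀ : Fin (n + 1) → ℝ) (Fin.snoc Y y₀) = 3 / 2) := by
  have hinj : Function.Injective (fun j : Fin n => (j : ℝ)) :=
    Nat.cast_injective.comp Fin.val_injective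
  have hcross : ∀ j : Fin n, ((j : ℝ) - n) * ((j : ℝ) - -1) < 0 := fun j =>
    mul_neg_of_neg_of_pos (sub_neg.2 (Nat.cast_lt.2 j.isLt))
      (by rw [sub_neg_eq_add]; positivity)
  refine ⟨⟨_, _, n, -1, hinj, hinj, ?_, ?_, discord_self _, hcross, ?_⟩, ?_⟩
  · refine Fin.snoc_injective_iff.2 ⟨hinj, ?_⟩
    rintro ⟨j, hj⟩
    exact (Nat.cast_injective hj).not_lt j.isLt
  · refine Fin.snoc_injective_iff.2 ⟨hinj, ?_⟩
    rintro ⟨j, hj⟩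
    exact (neg_one_lt_zero.trans_le j.val.cast_nonneg).ne' hj
  · rw [discord_snoc, discord_self, filter_true_of_mem fun j _ => hcross j, card_univ,
      Fintype.card_fin, zero_add]
  · intro X Y x₀ y₀ _ _ _ _ h _ h'
    exact tauHat_sub_tauHat_of_discord (by omega) X Y _ _ h h'
end

section
/- Let n ≥ 2, let D = {(X_1,Y_1),…,(X_n,Y_n)} be a dataset of pairs of reals with all X_i distinct and all Y_i distinct, and let D' = D ∪ {(X_{n+1},Y_{n+1})} be obtained by adding one point (with D' also tie-free). Then τ̂(D) − τ̂(D') = 2·(d_{D'} − d_D)/n − d_D / C(n,2) − 1/2, where C(n,2) = n(n−1)/2. -/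
/-! The identity is pure algebra in `n`, `d_D` and `d_{D'}`: with `C(n,2) = n(n-1)/2` it reduces
to `1/(n-1) = 1/n + 1/(n(n-1))`. -/

lemma tauHat_sub_tauHat_of_card_succ {n : ℕ} (hn : 2 ≤ n) (X Y : Fin n → ℝ)
    (X' Y' : Fin (n + 1) → ℝ) :
    tauHat X Y - tauHat X' Y'
      = 2 * ((discord X' Y' : ℝ) - discord X Y) / n - (discord X Y : ℝ) / (n.choose 2 : ℝ)
        - 1 / 2 := by
  have hn₀ : (n : ℝ) ≠ 0 := by positivity
  have hn₁ : (n : ℝ) - 1 ≠ 0 := by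
    have : (2 : ℝ) ≤ n := by exact_mod_cast hn
    linarith
  rw [tauHat, tauHat, Nat.cast_choose_two]
  push_cast [add_sub_cancel_right]
  field_simp
  ring

theorem tauHat_add_one_difference_general (n : ℕ) (hn : 2 ≤ n) (X Y : Fin (n + 1) → ℝ) :
    tauHat (fun i : Fin n => X i.castSucc) (fun i : Fin n => Y i.castSucc) - tauHat X Y
      = 2 * ((discord X Y : ℝ)
            - (discord (fun i : Fin n => X i.castSucc) (fun i : Fin n => Y i.castSucc) : ℝ))
          / (n : ℝ)
        - (discord (fun i : Fin n => X i.castSucc) (fun i : Fin n => Y i.castSucc) : ℝ)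
          / (n.choose 2 : ℝ)
        - 1 / 2 :=
  tauHat_sub_tauHat_of_card_succ hn _ _ X Y

/-- For a tie-free dataset `D` of `n ≥ 2` points and the neighbor `D'` obtained by adding one
point, `τ̂(D) - τ̂(D') = 2 (d_{D'} - d_D)/n - d_D / C(n,2) - 1/2`. -/
theorem tauHat_add_one_difference (n : ℕ) (hn : 2 ≤ n) (X Y : Fin (n + 1) → ℝ)
    (hX : Function.Injective X) (hY : Function.Injective Y) :
    tauHat (fun i : Fin n => X i.castSucc) (fun i : Fin n => Y i.castSucc) - tauHat X Y
      = 2 * ((discord X Y : ℝ)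
            - (discord (fun i : Fin n => X i.castSucc) (fun i : Fin n => Y i.castSucc) : ℝ))
          / (n : ℝ)
        - (discord (fun i : Fin n => X i.castSucc) (fun i : Fin n => Y i.castSucc) : ℝ)
          / (n.choose 2 : ℝ)
        - 1 / 2 :=
  tauHat_add_one_difference_general n hn X Y
end

section
/- Let U and W be independent real random variables with U ~ N(0, σ²) and W ~ N(0, τ²), where σ > 0 and τ > 0, and let β ∈ ℝ. Then P[U·(βU + W) > 0] − P[U·(βU + W) < 0] = (2/π)·arctan(βσ/τ). -/
/-!
Standardizing, `(U/σ, W/τ)` is a standard Gaussian vector in the plane and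
`U (βU + W) = στ · x (a x + y)` with `(x, y) = (U/σ, W/τ)` and `a = βσ/τ`. A standard Gaussian
vector has a rotation-invariant law, so (polar coordinates) it gives a cone the measure of its
angular opening divided by `2π`. The cone `{x > 0, a x + y > 0}` has opening `π/2 + arctan a`;
the event `x (a x + y) > 0` is this cone together with its image under `p ↦ -p`, and the event
`x (a x + y) < 0` is the reflection `y ↦ -y` of the first event for `-a`.
-/

open MeasureTheory ProbabilityTheory Real Set

lemma integral_Ioi_mul_exp_neg_sq_div_two : ∫ r in Ioi (0 : ℝ), r * exp (-r ^ 2 / 2) = 1 := by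
  have h := integral_rpow_mul_exp_neg_mul_rpow (p := 2) (q := 1) (b := 1 / 2)
    two_pos (by norm_num) (by norm_num)
  norm_num at h
  rw [← h]
  exact setIntegral_congr_fun measurableSet_Ioi fun r _ => by ring_nf

lemma gaussianPDFReal_mul_gaussianPDFReal (x y : ℝ) :
    gaussianPDFReal 0 1 x * gaussianPDFReal 0 1 y = (2 * π)⁻¹ * exp (-(x ^ 2 + y ^ 2) / 2) := by
  simp only [gaussianPDFReal]
  push_cast
  rw [mul_mul_mul_comm, ← mul_inv, mul_one, mul_self_sqrt (by positivity), ← exp_add]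
  ring_nf

lemma gaussianReal_prod_real_eq_integral (S : Set (ℝ × ℝ)) (hS : MeasurableSet S) :
    ((gaussianReal 0 1).prod (gaussianReal 0 1)).real S
      = ∫ z, S.indicator (fun z => gaussianPDFReal 0 1 z.1 * gaussianPDFReal 0 1 z.2) z := by
  set G := fun z : ℝ × ℝ => gaussianPDFReal 0 1 z.1 * gaussianPDFReal 0 1 z.2
  have hG : Integrable G (volume.prod volume) :=
    (integrable_gaussianPDFReal 0 1).mul_prod (integrable_gaussianPDFReal 0 1)
  have hG₀ : 0 ≤ᵐ[(volume.prod volume).restrict S] G :=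
    ae_of_all _ fun z => mul_nonneg (gaussianPDFReal_nonneg 0 1 z.1)
      (gaussianPDFReal_nonneg 0 1 z.2)
  rw [gaussianReal_of_var_ne_zero 0 one_ne_zero, prod_withDensity (measurable_gaussianPDF 0 1)
    (measurable_gaussianPDF 0 1), measureReal_def, withDensity_apply _ hS,
    integral_indicator hS, Measure.volume_eq_prod,
    integral_eq_lintegral_of_nonneg_ae hG₀ hG.restrict.aestronglyMeasurable]
  congr 1
  refine lintegral_congr fun z => ?_
  rw [ENNReal.ofReal_mul (gaussianPDFReal_nonneg 0 1 z.1), gaussianPDF, gaussianPDF]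

lemma gaussianReal_prod_real_of_cone {S : Set (ℝ × ℝ)} (hS : MeasurableSet S)
    (hcone : ∀ r : ℝ, 0 < r → ∀ p : ℝ × ℝ, r • p ∈ S ↔ p ∈ S) :
    ((gaussianReal 0 1).prod (gaussianReal 0 1)).real S
      = volume.real ({θ | (cos θ, sin θ) ∈ S} ∩ Ioo (-π) π) / (2 * π) := by
  set A := {θ | (cos θ, sin θ) ∈ S}
  have hA : MeasurableSet A := hS.preimage (by fun_prop)
  have hpolar : ∀ p ∈ polarCoord.target, p.1 • S.indicator
      (fun z => gaussianPDFReal 0 1 z.1 * gaussianPDFReal 0 1 z.2) (polarCoord.symm p)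
        = (p.1 * exp (-p.1 ^ 2 / 2)) * ((2 * π)⁻¹ * A.indicator 1 p.2) := by
    rintro ⟨r, θ⟩ ⟨hr, -⟩
    have hsymm : polarCoord.symm (r, θ) = r • (cos θ, sin θ) := by
      simp [polarCoord_symm_apply]
    rw [hsymm]
    by_cases hθ : θ ∈ A
    · rw [indicator_of_mem ((hcone r hr _).2 hθ), indicator_of_mem hθ,
        gaussianPDFReal_mul_gaussianPDFReal]
      simp only [Prod.smul_mk, smul_eq_mul, Pi.one_apply]
      rw [show (r * cos θ) ^ 2 + (r * sin θ) ^ 2 = r ^ 2 by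
        linear_combination r ^ 2 * sin_sq_add_cos_sq θ]
      ring
    · rw [indicator_of_notMem (fun h => hθ ((hcone r hr _).1 h)), indicator_of_notMem hθ]
      simp
  rw [gaussianReal_prod_real_eq_integral S hS, ← integral_comp_polarCoord_symm,
    setIntegral_congr_fun polarCoord.open_target.measurableSet hpolar, polarCoord_target,
    Measure.volume_eq_prod, setIntegral_prod_mul (fun r => r * exp (-r ^ 2 / 2))
      (fun θ => (2 * π)⁻¹ * A.indicator 1 θ), integral_Ioi_mul_exp_neg_sq_div_two,
    one_mul, integral_const_mul, integral_indicator_one hA, measureReal_restrict_apply hA]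
  ring

lemma cos_pos_iff_of_mem_Ioo {θ : ℝ} (hθ : θ ∈ Ioo (-π) π) :
    0 < cos θ ↔ θ ∈ Ioo (-(π / 2)) (π / 2) := by
  refine ⟨fun hcos => ⟨?_, ?_⟩, cos_pos_of_mem_Ioo⟩ <;> by_contra! h
  · have := cos_nonpos_of_pi_div_two_le_of_le (x := -θ) (by linarith) (by linarith [hθ.1])
    rw [cos_neg] at this
    linarith
  · linarith [cos_nonpos_of_pi_div_two_le_of_le h (by linarith [hθ.2])]

lemma mul_cos_add_sin_pos_iff {a θ : ℝ} (hθ : θ ∈ Ioo (-(π / 2)) (π / 2)) :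
    0 < a * cos θ + sin θ ↔ -arctan a < θ := by
  have hcos := cos_pos_of_mem_Ioo hθ
  calc 0 < a * cos θ + sin θ ↔ -a < sin θ / cos θ := by
        rw [lt_div_iff₀ hcos]; constructor <;> intro <;> linarith
    _ ↔ arctan (-a) < arctan (tan θ) := by rw [arctan_lt_arctan_iff, tan_eq_sin_div_cos]
    _ ↔ -arctan a < θ := by rw [arctan_neg, arctan_tan hθ.1 hθ.2]

def sector (a : ℝ) : Set (ℝ × ℝ) := {p | 0 < p.1 ∧ 0 < a * p.1 + p.2}

lemma measurableSet_sector (a : ℝ) : MeasurableSet (sector a) :=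
  (measurableSet_lt measurable_const measurable_fst).inter
    (measurableSet_lt measurable_const (by fun_prop : Measurable fun p : ℝ × ℝ => a * p.1 + p.2))

lemma smul_mem_sector_iff {a r : ℝ} (hr : 0 < r) {p : ℝ × ℝ} :
    r • p ∈ sector a ↔ p ∈ sector a := by
  simp only [sector, mem_ofPred_eq, Prod.smul_fst, Prod.smul_snd, smul_eq_mul,
    show a * (r * p.1) + r * p.2 = r * (a * p.1 + p.2) by ring, mul_pos_iff_of_pos_left hr]

lemma setOf_cos_sin_mem_sector_inter_Ioo (a : ℝ) :
    {θ : ℝ | (cos θ, sin θ) ∈ sector a} ∩ Ioo (-π) π = Ioo (-arctan a) (π / 2) := by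
  have h₁ := arctan_lt_pi_div_two a
  ext θ
  constructor
  · rintro ⟨⟨hcos, hpos⟩, hθ⟩
    have hθ' := (cos_pos_iff_of_mem_Ioo hθ).1 hcos
    exact ⟨(mul_cos_add_sin_pos_iff hθ').1 hpos, hθ'.2⟩
  · rintro ⟨hlo, hhi⟩
    have hθ' : θ ∈ Ioo (-(π / 2)) (π / 2) := ⟨by linarith, hhi⟩
    exact ⟨⟨cos_pos_of_mem_Ioo hθ', (mul_cos_add_sin_pos_iff hθ').2 hlo⟩,
      by linarith, by linarith⟩

lemma gaussianReal_prod_real_sector (a : ℝ) :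
    ((gaussianReal 0 1).prod (gaussianReal 0 1)).real (sector a)
      = 1 / 4 + arctan a / (2 * π) := by
  rw [gaussianReal_prod_real_of_cone (measurableSet_sector a) fun r hr _ => smul_mem_sector_iff hr,
    setOf_cos_sin_mem_sector_inter_Ioo,
    volume_real_Ioo_of_le (by linarith [neg_pi_div_two_lt_arctan a])]
  field_simp
  ring

lemma measurePreserving_neg_gaussianReal (v : NNReal) :
    MeasurePreserving (fun x : ℝ => -x) (gaussianReal 0 v) (gaussianReal 0 v) :=
  ⟨measurable_neg, by rw [gaussianReal_map_neg, neg_zero]⟩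

lemma gaussianReal_prod_real_mul_pos (a : ℝ) :
    ((gaussianReal 0 1).prod (gaussianReal 0 1)).real {p : ℝ × ℝ | 0 < p.1 * (a * p.1 + p.2)}
      = 1 / 2 + arctan a / π := by
  have hneg := (measurePreserving_neg_gaussianReal 1).prod (measurePreserving_neg_gaussianReal 1)
  have hsplit : {p : ℝ × ℝ | 0 < p.1 * (a * p.1 + p.2)}
      = sector a ∪ Prod.map (fun x : ℝ => -x) (fun x : ℝ => -x) ⁻¹' sector a := by
    ext p
    simp only [sector, mem_union, mem_preimage, Prod.map_fst, Prod.map_snd, mem_ofPred_eq,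
      mul_pos_iff]
    constructor <;> rintro (⟨h₁, h₂⟩ | ⟨h₁, h₂⟩) <;> [left; right; left; right] <;>
      constructor <;> linarith
  have hdisj : Disjoint (sector a) (Prod.map (fun x : ℝ => -x) (fun x : ℝ => -x) ⁻¹' sector a) :=
    disjoint_left.2 fun p hp hp' => by
      simp only [sector, mem_preimage, Prod.map_fst, mem_ofPred_eq] at hp hp'
      linarith [hp.1, hp'.1]
  rw [hsplit, measureReal_union hdisj (hneg.measurable (measurableSet_sector a)),
    hneg.measureReal_preimage (measurableSet_sector a).nullMeasurableSet,
    gaussianReal_prod_real_sector]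
  ring

lemma gaussianReal_prod_real_mul_neg (a : ℝ) :
    ((gaussianReal 0 1).prod (gaussianReal 0 1)).real {p : ℝ × ℝ | p.1 * (a * p.1 + p.2) < 0}
      = 1 / 2 - arctan a / π := by
  have hrefl :=
    (MeasurePreserving.id (gaussianReal 0 1)).prod (measurePreserving_neg_gaussianReal 1)
  have hreflect : {p : ℝ × ℝ | p.1 * (a * p.1 + p.2) < 0}
      = Prod.map id (fun x : ℝ => -x) ⁻¹' {p : ℝ × ℝ | 0 < p.1 * (-a * p.1 + p.2)} := by
    ext p
    simp only [mem_preimage, Prod.map_fst, Prod.map_snd, id, mem_ofPred_eq]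
    rw [show p.1 * (-a * p.1 + -p.2) = -(p.1 * (a * p.1 + p.2)) by ring, neg_pos]
  rw [hreflect, hrefl.measureReal_preimage (measurableSet_lt measurable_const
      (by fun_prop : Measurable fun p : ℝ × ℝ => p.1 * (-a * p.1 + p.2))).nullMeasurableSet,
    gaussianReal_prod_real_mul_pos, arctan_neg]
  ring

lemma gaussianReal_div_std {Ω : Type*} {mΩ : MeasurableSpace Ω} {P : Measure Ω} {X : Ω → ℝ}
    {s : NNReal} (hs : s ≠ 0) (hX : HasLaw X (gaussianReal 0 (s ^ 2)) P) :
    HasLaw (fun ω => X ω / s) (gaussianReal 0 1) P := by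
  convert gaussianReal_div_const hX s using 2
  · simp
  · ext; simp [hs]

/-- For independent centered Gaussians `U ~ N(0, σ²)` and `W ~ N(0, τ²)` and any `β ∈ ℝ`,
`P[U (βU + W) > 0] - P[U (βU + W) < 0] = (2/π) arctan(β σ / τ)`. -/
theorem gaussian_sign_prob_arctan {Ω : Type*} [MeasureSpace Ω]
    [IsProbabilityMeasure (ℙ : Measure Ω)]
    (U W : Ω → ℝ) (hU : Measurable U) (hW : Measurable W)
    (σ τ : NNReal) (hσ : 0 < σ) (hτ : 0 < τ) (β : ℝ)
    (hind : IndepFun U W ℙ)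
    (hUlaw : Measure.map U ℙ = gaussianReal 0 (σ ^ 2))
    (hWlaw : Measure.map W ℙ = gaussianReal 0 (τ ^ 2)) :
    (ℙ {ω | 0 < U ω * (β * U ω + W ω)}).toReal
        - (ℙ {ω | U ω * (β * U ω + W ω) < 0}).toReal
      = 2 / Real.pi * Real.arctan (β * (σ : ℝ) / (τ : ℝ)) := by
  have hlaw : HasLaw (fun ω => (U ω / σ, W ω / τ))
      ((gaussianReal 0 1).prod (gaussianReal 0 1)) ℙ :=
    (hind.comp (measurable_div_const _) (measurable_div_const _)).hasLaw_prod
      (gaussianReal_div_std hσ.ne' ⟨hU.aemeasurable, hUlaw⟩)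
      (gaussianReal_div_std hτ.ne' ⟨hW.aemeasurable, hWlaw⟩)
  have hστ : (0 : ℝ) < σ * τ := by positivity
  have hscale : ∀ ω, U ω * (β * U ω + W ω)
      = σ * τ * (U ω / σ * (β * σ / τ * (U ω / σ) + W ω / τ)) := fun ω => by
    field_simp
  have hneg_iff : ∀ x : ℝ, σ * τ * x < 0 ↔ x < 0 := fun x =>
    ⟨fun h => neg_of_mul_neg_right h hστ.le, mul_neg_of_pos_of_neg hστ⟩
  simp_rw [← measureReal_def, hscale, mul_pos_iff_of_pos_left hστ, hneg_iff]
  rw [hlaw.measureReal_eq (p := fun z => 0 < z.1 * (β * σ / τ * z.1 + z.2))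
      (measurableSet_lt measurable_const (by fun_prop)),
    hlaw.measureReal_eq (p := fun z => z.1 * (β * σ / τ * z.1 + z.2) < 0)
      (measurableSet_lt (by fun_prop) measurable_const),
    gaussianReal_prod_real_mul_pos, gaussianReal_prod_real_mul_neg]
  ring
end

section
/- The ℓ1-sensitivity of the sample Pearson correlation under addition of a single data point equals 2. That is: (i) for any dataset D (with nondegenerate coordinates so that r(D) is defined) and any neighboring dataset D' = D ∪ {(x_0,y_0)} with r(D') defined, |r(D) − r(D')| ≤ 2; and (ii) for every θ < 2 there exist a dataset D and a neighbor D' = D ∪ {(x_0,y_0)}, both with r defined, such that |r(D) − r(D')| > θ. -/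
/-- The sample Pearson correlation of the dataset `{(X i, Y i)}`. -/
noncomputable def pearson {m : ℕ} (X Y : Fin m → ℝ) : ℝ :=
  (∑ i, (X i - (∑ j, X j) / m) * (Y i - (∑ j, Y j) / m)) /
    (Real.sqrt (∑ i, (X i - (∑ j, X j) / m) ^ 2) *
      Real.sqrt (∑ i, (Y i - (∑ j, Y j) / m) ^ 2))

/-- A coordinate vector is nondegenerate if its values are not all equal. -/
def Nondeg {m : ℕ} (X : Fin m → ℝ) : Prop := ∃ i j, X i ≠ X j

/-- Pearson correlation always lies in `[-1, 1]`, by Cauchy–Schwarz. -/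
lemma abs_pearson_le_one {m : ℕ} (X Y : Fin m → ℝ) : |pearson X Y| ≤ 1 := by
  unfold pearson
  set f : Fin m → ℝ := fun i => X i - (∑ j, X j) / m with hf
  set g : Fin m → ℝ := fun i => Y i - (∑ j, Y j) / m with hg
  have hA : (0:ℝ) ≤ ∑ i, f i ^ 2 := Finset.sum_nonneg fun i _ => sq_nonneg _
  have hcs : (∑ i, f i * g i) ^ 2 ≤ (∑ i, f i ^ 2) * ∑ i, g i ^ 2 :=
    Finset.sum_mul_sq_le_sq_mul_sq _ _ _
  have key : |∑ i, f i * g i| ≤ Real.sqrt (∑ i, f i ^ 2) * Real.sqrt (∑ i, g i ^ 2) := by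
    rw [← Real.sqrt_sq_eq_abs, ← Real.sqrt_mul hA]
    exact Real.sqrt_le_sqrt hcs
  rw [abs_div, abs_of_nonneg (mul_nonneg (Real.sqrt_nonneg _) (Real.sqrt_nonneg _))]
  exact div_le_one_of_le₀ key (mul_nonneg (Real.sqrt_nonneg _) (Real.sqrt_nonneg _))

lemma pearson_two : pearson ![(-1:ℝ),1] ![(-1:ℝ),1] = 1 := by
  unfold pearson
  simp only [Fin.sum_univ_two, Matrix.cons_val_zero, Matrix.cons_val_one, Matrix.head_cons]
  norm_num

lemma pearson_three (t : ℝ) :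
    pearson ![(-1:ℝ),1,t] ![(-1:ℝ),1,-t] = (3 - t^2)/(3 + t^2) := by
  unfold pearson
  simp only [Fin.sum_univ_three, Matrix.cons_val_zero, Matrix.cons_val_one, Matrix.head_cons,
    Matrix.cons_val_two, Matrix.tail_cons]
  push_cast
  have hA : (0:ℝ) ≤ 2 + 2/3*t^2 := by positivity
  rw [show ((-1:ℝ) - (-1 + 1 + t) / 3) ^ 2 + (1 - (-1 + 1 + t) / 3) ^ 2
      + (t - (-1 + 1 + t) / 3) ^ 2 = 2 + 2/3*t^2 by ring,
    show ((-1:ℝ) - (-1 + 1 + -t) / 3) ^ 2 + (1 - (-1 + 1 + -t) / 3) ^ 2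
      + (-t - (-1 + 1 + -t) / 3) ^ 2 = 2 + 2/3*t^2 by ring,
    Real.mul_self_sqrt hA,
    show ((-1:ℝ) - (-1 + 1 + t) / 3) * (-1 - (-1 + 1 + -t) / 3)
      + (1 - (-1 + 1 + t) / 3) * (1 - (-1 + 1 + -t) / 3)
      + (t - (-1 + 1 + t) / 3) * (-t - (-1 + 1 + -t) / 3) = 2 - 2/3*t^2 by ring]
  have h3 : (0:ℝ) < 3 + t^2 := by positivity
  field_simp

/-- The ℓ1-sensitivity of sample Pearson correlation under addition of one data point is `2`:
(i) for every dataset and every neighbor obtained by adding one point (both nondegenerate),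
the correlations differ by at most `2`; (ii) for every `θ < 2` there is such a pair whose
correlations differ by more than `θ`. -/
theorem pearson_sensitivity_eq_two :
    (∀ (n : ℕ) (X Y : Fin (n + 1) → ℝ),
      Nondeg (fun i : Fin n => X i.castSucc) → Nondeg (fun i : Fin n => Y i.castSucc) →
      Nondeg X → Nondeg Y →
      |pearson (fun i : Fin n => X i.castSucc) (fun i : Fin n => Y i.castSucc)
          - pearson X Y| ≤ 2) ∧
    (∀ θ : ℝ, θ < 2 → ∃ (n : ℕ) (X Y : Fin (n + 1) → ℝ),
      Nondeg (fun i : Fin n => X i.castSucc) ∧ Nondeg (fun i : Fin n => Y i.castSucc) ∧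
      Nondeg X ∧ Nondeg Y ∧
      θ < |pearson (fun i : Fin n => X i.castSucc) (fun i : Fin n => Y i.castSucc)
          - pearson X Y|) := by
  constructor
  · intro n X Y _ _ _ _
    calc |pearson (fun i : Fin n => X i.castSucc) (fun i : Fin n => Y i.castSucc) - pearson X Y|
        ≤ |pearson (fun i : Fin n => X i.castSucc) (fun i : Fin n => Y i.castSucc)|
          + |pearson X Y| := abs_sub _ _
      _ ≤ 1 + 1 := add_le_add (abs_pearson_le_one _ _) (abs_pearson_le_one _ _)
      _ = 2 := by norm_num
  · intro θ hθ
    set θ₀ : ℝ := max θ 0 with hθ₀def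
    have hθ₀0 : 0 ≤ θ₀ := le_max_right _ _
    have hθ₀2 : θ₀ < 2 := max_lt hθ (by norm_num)
    set s : ℝ := 3 * (θ₀ + 2) / (2 - θ₀) with hsdef
    have h2θ : (0:ℝ) < 2 - θ₀ := by linarith
    have hs0 : 0 ≤ s := by positivity
    set t : ℝ := Real.sqrt s with htdef
    have ht2 : t ^ 2 = s := Real.sq_sqrt hs0
    have ht1 : 1 ≤ t := by
      rw [htdef, show (1:ℝ) = Real.sqrt 1 by simp]
      apply Real.sqrt_le_sqrt
      rw [hsdef, le_div_iff₀ h2θ]; nlinarith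
    refine ⟨2, ![(-1:ℝ),1,t], ![(-1:ℝ),1,-t], ?_, ?_, ?_, ?_, ?_⟩
    · exact ⟨0, 1, by norm_num⟩
    · exact ⟨0, 1, by norm_num⟩
    · exact ⟨0, 1, by norm_num⟩
    · exact ⟨0, 1, by norm_num⟩
    · have hXr : (fun i : Fin 2 => (![(-1:ℝ),1,t]) i.castSucc) = ![(-1:ℝ),1] := by
        funext i; fin_cases i <;> simp
      have hYr : (fun i : Fin 2 => (![(-1:ℝ),1,-t]) i.castSucc) = ![(-1:ℝ),1] := by
        funext i; fin_cases i <;> simp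
      rw [hXr, hYr, pearson_two, pearson_three]
      have h3s : (0:ℝ) < 3 + t ^ 2 := by positivity
      have hval : 1 - (3 - t ^ 2) / (3 + t ^ 2) = (θ₀ + 2) / 2 := by
        rw [ht2, hsdef]
        field_simp
        ring
      rw [hval, abs_of_nonneg (by linarith)]
      have : θ ≤ θ₀ := le_max_left _ _
      linarith
end

section
/- Let D be a finite multiset of points in ℝ^d, let D' = D ∪ {x} for some x ∈ ℝ^d, let ε > 0, and let p ≥ 1 be an integer. Then w_D(V_{p+1,D}) ≤ w_D(V_{p,D}) ≤ w_{D'}(V_{p,D'}) ≤ e^ε · w_D(V_{p−1,D}), where w_D(V_{i,D}) = ∫_{S_{i,D}} exp(ε·T̃_D(y)) dy (Lebesgue integral). -/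
open MeasureTheory

/-- The `i`-th canonical basis vector of `ℝ^d`. -/
def stdBasisVec (d : ℕ) (i : Fin d) : Fin d → ℝ := fun j => if j = i then 1 else 0

/-- The halfspace `h_v = {y : ⟨v, y⟩ ≥ 0}` determined by `v ∈ ℝ^d`. -/
def halfspace {d : ℕ} (v : Fin d → ℝ) : Set (Fin d → ℝ) := {y | 0 ≤ ∑ j, v j * y j}

open Classical in
/-- The approximate Tukey depth of `y` with respect to the multiset `D`: the minimum, over
the `2d` halfspaces determined by `±` canonical basis vectors that contain `y`, of the number
of points of `D` in the halfspace. -/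
noncomputable def approxTukeyDepth {d : ℕ} (D : Multiset (Fin d → ℝ)) (y : Fin d → ℝ) : ℕ :=
  sInf {m : ℕ | ∃ v : Fin d → ℝ,
    (∃ i : Fin d, v = stdBasisVec d i ∨ v = -stdBasisVec d i) ∧
    y ∈ halfspace v ∧ m = Multiset.card (D.filter (fun x => x ∈ halfspace v))}

/-- `S_{i,D}`: the set of points of approximate Tukey depth at least `i` in `D`. -/
def depthSet {d : ℕ} (D : Multiset (Fin d → ℝ)) (i : ℤ) : Set (Fin d → ℝ) :=
  {y | i ≤ (approxTukeyDepth D y : ℤ)}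

/-- `w_D(V_{i,D}) = ∫_{S_{i,D}} exp(ε T̃_D(y)) dy`: the exponential-mechanism weight of
`S_{i,D}` with score function the approximate Tukey depth. -/
noncomputable def emWeight {d : ℕ} (ε : ℝ) (D : Multiset (Fin d → ℝ)) (i : ℤ) : ENNReal :=
  ∫⁻ y in depthSet D i, ENNReal.ofReal (Real.exp (ε * approxTukeyDepth D y))

open Classical in
lemma approxTukeyDepth_le_cons {d : ℕ} (D : Multiset (Fin d → ℝ)) (x y : Fin d → ℝ) :
    approxTukeyDepth D y ≤ approxTukeyDepth (x ::ₘ D) y := by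
  unfold approxTukeyDepth
  by_cases h : {m : ℕ | ∃ v : Fin d → ℝ,
      (∃ i : Fin d, v = stdBasisVec d i ∨ v = -stdBasisVec d i) ∧
      y ∈ halfspace v ∧
        m = Multiset.card ((x ::ₘ D).filter (fun z => z ∈ halfspace v))}.Nonempty
  · obtain ⟨v, hv, hy, hcard⟩ := Nat.sInf_mem h
    rw [hcard]
    refine le_trans (Nat.sInf_le ⟨v, hv, hy, rfl⟩) ?_
    rw [Multiset.filter_cons]; split <;> simp
  · have hD : {m : ℕ | ∃ v : Fin d → ℝ,
        (∃ i : Fin d, v = stdBasisVec d i ∨ v = -stdBasisVec d i) ∧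
        y ∈ halfspace v ∧
          m = Multiset.card (D.filter (fun z => z ∈ halfspace v))} = ∅ := by
      rw [Set.eq_empty_iff_forall_notMem]
      rintro m ⟨v, hv, hy, hcard⟩
      exact h ⟨_, v, hv, hy, rfl⟩
    rw [hD, Nat.sInf_empty]
    exact Nat.zero_le _

open Classical in
lemma approxTukeyDepth_cons_le {d : ℕ} (D : Multiset (Fin d → ℝ)) (x y : Fin d → ℝ) :
    approxTukeyDepth (x ::ₘ D) y ≤ approxTukeyDepth D y + 1 := by
  unfold approxTukeyDepth
  by_cases h : {m : ℕ | ∃ v : Fin d → ℝ,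
      (∃ i : Fin d, v = stdBasisVec d i ∨ v = -stdBasisVec d i) ∧
      y ∈ halfspace v ∧
        m = Multiset.card (D.filter (fun z => z ∈ halfspace v))}.Nonempty
  · obtain ⟨v, hv, hy, hcard⟩ := Nat.sInf_mem h
    rw [hcard]
    refine le_trans (Nat.sInf_le ⟨v, hv, hy, rfl⟩) ?_
    rw [Multiset.filter_cons]; split <;> simp
  · have hD : {m : ℕ | ∃ v : Fin d → ℝ,
        (∃ i : Fin d, v = stdBasisVec d i ∨ v = -stdBasisVec d i) ∧
        y ∈ halfspace v ∧
          m = Multiset.card ((x ::ₘ D).filter (fun z => z ∈ halfspace v))} = ∅ := by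
      rw [Set.eq_empty_iff_forall_notMem]
      rintro m ⟨v, hv, hy, hcard⟩
      exact h ⟨_, v, hv, hy, rfl⟩
    rw [hD, Nat.sInf_empty]
    exact Nat.zero_le _

/-- For `D' = D ∪ {x}`, `ε > 0`, and an integer `p ≥ 1`,
`w_D(V_{p+1,D}) ≤ w_D(V_{p,D}) ≤ w_{D'}(V_{p,D'}) ≤ e^ε w_D(V_{p-1,D})`. -/
theorem emWeight_add_one_nested {d : ℕ} (D : Multiset (Fin d → ℝ)) (x : Fin d → ℝ)
    (ε : ℝ) (hε : 0 < ε) (p : ℤ) (hp : 1 ≤ p) :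
    emWeight ε D (p + 1) ≤ emWeight ε D p ∧
      emWeight ε D p ≤ emWeight ε (x ::ₘ D) p ∧
      emWeight ε (x ::ₘ D) p ≤ ENNReal.ofReal (Real.exp ε) * emWeight ε D (p - 1) := by
  classical
  have hA : ∀ y, approxTukeyDepth D y ≤ approxTukeyDepth (x ::ₘ D) y := fun y =>
    approxTukeyDepth_le_cons D x y
  have hB : ∀ y, approxTukeyDepth (x ::ₘ D) y ≤ approxTukeyDepth D y + 1 := fun y =>
    approxTukeyDepth_cons_le D x y
  refine ⟨?_, ?_, ?_⟩
  · refine lintegral_mono_set (fun y hy => ?_)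
    have h : p + 1 ≤ (approxTukeyDepth D y : ℤ) := hy
    show p ≤ (approxTukeyDepth D y : ℤ)
    linarith
  · calc emWeight ε D p
        ≤ ∫⁻ y in depthSet D p,
            ENNReal.ofReal (Real.exp (ε * approxTukeyDepth (x ::ₘ D) y)) := by
          apply lintegral_mono
          intro y
          apply ENNReal.ofReal_le_ofReal
          apply Real.exp_le_exp.mpr
          have h : (approxTukeyDepth D y : ℝ) ≤ approxTukeyDepth (x ::ₘ D) y := by
            exact_mod_cast hA y
          exact mul_le_mul_of_nonneg_left h hε.le
      _ ≤ emWeight ε (x ::ₘ D) p := by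
          apply lintegral_mono_set
          intro y hy
          have h : (approxTukeyDepth D y : ℤ) ≤ approxTukeyDepth (x ::ₘ D) y := by
            exact_mod_cast hA y
          exact le_trans hy h
  · have hsub : depthSet (x ::ₘ D) p ⊆ depthSet D (p - 1) := by
      intro y hy
      have h : (approxTukeyDepth (x ::ₘ D) y : ℤ) ≤ (approxTukeyDepth D y : ℤ) + 1 := by
        exact_mod_cast hB y
      have hy' : p ≤ (approxTukeyDepth (x ::ₘ D) y : ℤ) := hy
      show p - 1 ≤ (approxTukeyDepth D y : ℤ)
      linarith
    calc emWeight ε (x ::ₘ D) p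
        ≤ ∫⁻ y in depthSet (x ::ₘ D) p,
            ENNReal.ofReal (Real.exp ε) *
              ENNReal.ofReal (Real.exp (ε * approxTukeyDepth D y)) := by
          apply lintegral_mono
          intro y
          dsimp only
          rw [← ENNReal.ofReal_mul (Real.exp_pos ε).le, ← Real.exp_add]
          apply ENNReal.ofReal_le_ofReal
          apply Real.exp_le_exp.mpr
          have h : (approxTukeyDepth (x ::ₘ D) y : ℝ) ≤ (approxTukeyDepth D y : ℝ) + 1 := by
            exact_mod_cast hB y
          nlinarith
      _ ≤ ∫⁻ y in depthSet D (p - 1),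
            ENNReal.ofReal (Real.exp ε) *
              ENNReal.ofReal (Real.exp (ε * approxTukeyDepth D y)) :=
          lintegral_mono_set hsub
      _ = ENNReal.ofReal (Real.exp ε) * emWeight ε D (p - 1) :=
          lintegral_const_mul' _ _ ENNReal.ofReal_ne_top
end
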